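/- arXiv:2010.04557 — 2 statements merged into one kernel-verified Lean document; each statement's English description precedes it below -/
import Mathlib

section
/- Fix a > 0 and an integer j ≥ 0. Let S ⊆ ℤ be a finite set and let b : ℤ → ℝ satisfy |b_k| ≤ 1 for all k. Define θ = Σ_{k∈S} b_k (f_ε ⋆ ψ_{jk}), where f_ε is the uniform density on [−a,a]. Then ∫_ℝ |θ^*(ξ)|² dξ ≤ 6π c_ψ² |S| min( 1, (a 2^j)^{−2} ). -/
/-!
By the convolution theorem and the translation and dilation rules,
`θ^*(ξ) = f_ε^*(ξ) · 2^{-j/2} ψ^*(2^{-j} ξ) · P(2^{-j} ξ)` with `P(t) = ∑_{k ∈ S} b_k e^{ikt}`.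
After substituting `ξ = 2^j t`, only `t` in the band `±[2π/3, 8π/3]` carrying `ψ^*` contributes;
there `|ξ| ≥ 2^j`, so `|f_ε^*(ξ)| ≤ min(1, (a 2^j)⁻¹)`, and `|ψ^*| ≤ c_ψ`. Each half of the band
is a full period of `P`, so by Parseval `∫_band |P|² = 4π ∑ b_k² ≤ 4π |S|`.
-/

open MeasureTheory Real Set
open scoped Convolution FourierTransform

noncomputable def fourierStar (g : ℝ → ℂ) (ξ : ℝ) : ℂ :=
  ∫ x : ℝ, Complex.exp (Complex.I * x * ξ) * g x

lemma norm_exp_I_mul_mul (x ξ : ℝ) : ‖Complex.exp (Complex.I * x * ξ)‖ = 1 := by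
  simpa [mul_assoc] using Complex.norm_exp_I_mul_ofReal (x * ξ)

lemma norm_fourierStar_le_integral_norm (g : ℝ → ℂ) (ξ : ℝ) :
    ‖fourierStar g ξ‖ ≤ ∫ x, ‖g x‖ :=
  (norm_integral_le_integral_norm _).trans_eq (by simp_rw [norm_mul, norm_exp_I_mul_mul, one_mul])

lemma fourierStar_eq_fourier (g : ℝ → ℂ) (ξ : ℝ) : fourierStar g ξ = 𝓕 g (-ξ / (2 * π)) := by
  rw [Real.fourier_real_eq_integral_exp_smul, fourierStar]
  congr with x
  rw [smul_eq_mul]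
  congr 2
  push_cast
  field_simp

lemma fourierStar_convolution {f g : ℝ → ℂ} (hf : Integrable f) (hg : Integrable g) (ξ : ℝ) :
    fourierStar (f ⋆[ContinuousLinearMap.mul ℂ ℂ] g) ξ = fourierStar f ξ * fourierStar g ξ := by
  simp only [fourierStar_eq_fourier, Real.fourier_mul_convolution_eq hf hg]

lemma fourierStar_const_mul (c : ℂ) (g : ℝ → ℂ) (ξ : ℝ) :
    fourierStar (fun x => c * g x) ξ = c * fourierStar g ξ := by
  simp only [fourierStar, ← integral_const_mul, mul_left_comm]

lemma MeasureTheory.Integrable.fourierStar_integrand {g : ℝ → ℂ} (hg : Integrable g) (ξ : ℝ) :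
    Integrable fun x : ℝ => Complex.exp (Complex.I * x * ξ) * g x :=
  hg.bdd_mul (by fun_prop) (Filter.Eventually.of_forall fun x => (norm_exp_I_mul_mul x ξ).le)

lemma fourierStar_finset_sum {ι : Type*} (S : Finset ι) {g : ι → ℝ → ℂ}
    (hg : ∀ k ∈ S, Integrable (g k)) (ξ : ℝ) :
    fourierStar (fun x => ∑ k ∈ S, g k x) ξ = ∑ k ∈ S, fourierStar (g k) ξ := by
  simp only [fourierStar, Finset.mul_sum]
  exact integral_finsetSum S fun k hk => (hg k hk).fourierStar_integrand ξ

lemma fourierStar_comp_sub_right (g : ℝ → ℂ) (k ξ : ℝ) :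
    fourierStar (fun x => g (x - k)) ξ = Complex.exp (Complex.I * k * ξ) * fourierStar g ξ := by
  rw [fourierStar, ← integral_add_right_eq_self _ k, fourierStar, ← integral_const_mul]
  congr with x
  rw [add_sub_cancel_right, ← mul_assoc, ← Complex.exp_add]
  push_cast
  ring_nf

lemma fourierStar_comp_mul_left (g : ℝ → ℂ) {n : ℝ} (hn : n ≠ 0) (ξ : ℝ) :
    fourierStar (fun x => g (n * x)) ξ = |n⁻¹| * fourierStar g (ξ / n) := by
  rw [fourierStar, fourierStar, ← Complex.real_smul,
    ← Measure.integral_comp_mul_left (fun y => Complex.exp (Complex.I * y * ↑(ξ / n)) * g y)]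
  congr with x
  have : (n : ℂ) ≠ 0 := by exact_mod_cast hn
  push_cast
  field_simp

lemma fourierStar_comp_mul_sub (g : ℝ → ℂ) {n : ℝ} (hn : 0 < n) (k ξ : ℝ) :
    fourierStar (fun x => g (n * x - k)) ξ
      = n⁻¹ * Complex.exp (Complex.I * k * ↑(ξ / n)) * fourierStar g (ξ / n) := by
  rw [fourierStar_comp_mul_left (fun y => g (y - k)) hn.ne', fourierStar_comp_sub_right,
    abs_of_pos (inv_pos.2 hn)]
  push_cast
  ring

noncomputable def trigPoly (S : Finset ℤ) (c : ℤ → ℂ) (t : ℝ) : ℂ :=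
  ∑ k ∈ S, c k * Complex.exp (Complex.I * k * t)

lemma continuous_trigPoly (S : Finset ℤ) (c : ℤ → ℂ) : Continuous (trigPoly S c) := by
  unfold trigPoly; fun_prop

lemma integral_exp_int_mul_I (m : ℤ) (t₀ : ℝ) :
    ∫ t in t₀..t₀ + 2 * π, Complex.exp (Complex.I * m * t) = if m = 0 then (2 * π : ℂ) else 0 := by
  rcases eq_or_ne m 0 with rfl | hm
  · simp
  · have hc : Complex.I * m ≠ 0 := by simp [Complex.I_ne_zero, hm]
    rw [if_neg hm, integral_exp_mul_complex hc]
    have hperiod : Complex.I * m * ↑(t₀ + 2 * π)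
        = Complex.I * m * t₀ + m * (2 * π * Complex.I) := by
      push_cast; ring
    rw [hperiod, Complex.exp_add, Complex.exp_int_mul_two_pi_mul_I, mul_one, sub_self, zero_div]

lemma integral_norm_sq_trigPoly (S : Finset ℤ) (c : ℤ → ℂ) (t₀ : ℝ) :
    ∫ t in t₀..t₀ + 2 * π, ‖trigPoly S c t‖ ^ 2 = 2 * π * ∑ k ∈ S, ‖c k‖ ^ 2 := by
  have hexpand : ∀ t : ℝ, ((‖trigPoly S c t‖ ^ 2 : ℝ) : ℂ) =
      ∑ k ∈ S, ∑ l ∈ S, c k * starRingEnd ℂ (c l) * Complex.exp (Complex.I * ↑(k - l) * t) := by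
    intro t
    push_cast
    rw [← Complex.mul_conj', trigPoly, map_sum, Finset.sum_mul_sum]
    refine Finset.sum_congr rfl fun k _ => Finset.sum_congr rfl fun l _ => ?_
    rw [map_mul, ← Complex.exp_conj, mul_mul_mul_comm, ← Complex.exp_add]
    congr 2
    simp only [map_mul, Complex.conj_I, map_intCast, neg_mul, Complex.conj_ofReal]
    ring
  have hcont : ∀ k l : ℤ, Continuous
      fun t : ℝ => c k * starRingEnd ℂ (c l) * Complex.exp (Complex.I * ↑(k - l) * t) :=
    fun k l => by fun_prop
  suffices h : ((∫ t in t₀..t₀ + 2 * π, ‖trigPoly S c t‖ ^ 2 : ℝ) : ℂ)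
      = ((2 * π * ∑ k ∈ S, ‖c k‖ ^ 2 : ℝ) : ℂ) from mod_cast h
  rw [← intervalIntegral.integral_ofReal, intervalIntegral.integral_congr fun t _ => hexpand t,
    intervalIntegral.integral_finsetSum fun k _ =>
      (continuous_finsetSum S fun l _ => hcont k l).intervalIntegrable _ _]
  simp only [intervalIntegral.integral_finsetSum fun l _ => (hcont _ l).intervalIntegrable _ _,
    intervalIntegral.integral_const_mul, integral_exp_int_mul_I, sub_eq_zero, mul_ite, mul_zero,
    Finset.sum_ite_eq, Complex.mul_conj']
  push_cast
  rw [Finset.mul_sum]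
  refine Finset.sum_congr rfl fun k hk => ?_
  rw [if_pos hk]
  ring

lemma fourierStar_sum_convolution_comp_mul_sub {f g : ℝ → ℝ} (hf : Integrable f)
    (hg : Integrable g) {n : ℝ} (hn : 0 < n) (c : ℝ) (S : Finset ℤ) (b : ℤ → ℝ) (ξ : ℝ) :
    fourierStar (fun x => ((∑ k ∈ S, b k * ∫ u, f u * (c * g (n * (x - u) - k)) : ℝ) : ℂ)) ξ
      = fourierStar (fun x => (f x : ℂ)) ξ * (c / n) * fourierStar (fun x => (g x : ℂ)) (ξ / n)
        * trigPoly S (fun k => b k) (ξ / n) := by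
  set gk : ℤ → ℝ → ℂ := fun k y => c * g (n * y - k)
  have hgk : ∀ k, Integrable (gk k) := fun k =>
    (((hg.comp_sub_right (k : ℝ)).comp_mul_left' hn.ne').ofReal (𝕜 := ℂ)).const_mul _
  have hconv : ∀ x : ℝ, ((∑ k ∈ S, b k * ∫ u, f u * (c * g (n * (x - u) - k)) : ℝ) : ℂ)
      = ∑ k ∈ S, (b k : ℂ) * ((fun y => (f y : ℂ)) ⋆[ContinuousLinearMap.mul ℂ ℂ] gk k) x := by
    intro x
    push_cast
    refine Finset.sum_congr rfl fun k _ => ?_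
    rw [convolution_def, ← integral_complex_ofReal]
    push_cast
    rfl
  simp_rw [hconv]
  rw [fourierStar_finset_sum S (g := fun k x =>
      (b k : ℂ) * ((fun y => (f y : ℂ)) ⋆[ContinuousLinearMap.mul ℂ ℂ] gk k) x) fun k _ =>
    (hf.ofReal.integrable_convolution (ContinuousLinearMap.mul ℂ ℂ) (hgk k)).const_mul _]
  simp only [trigPoly, Finset.mul_sum]
  refine Finset.sum_congr rfl fun k _ => ?_
  have hfC : Integrable fun y => (f y : ℂ) := hf.ofReal
  rw [fourierStar_const_mul, fourierStar_convolution hfC (hgk k), fourierStar_const_mul,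
    fourierStar_comp_mul_sub (fun x => (g x : ℂ)) hn]
  push_cast
  ring

noncomputable def uniformDensity (a : ℝ) : ℝ → ℝ := (Icc (-a) a).indicator fun _ => 1 / (2 * a)

lemma integrable_uniformDensity (a : ℝ) : Integrable (uniformDensity a) :=
  (integrableOn_const measure_Icc_lt_top.ne).integrable_indicator measurableSet_Icc

lemma norm_fourierStar_uniformDensity_le_one {a : ℝ} (ha : 0 < a) (ξ : ℝ) :
    ‖fourierStar (fun x => (uniformDensity a x : ℂ)) ξ‖ ≤ 1 := by
  refine (norm_fourierStar_le_integral_norm _ ξ).trans_eq ?_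
  simp_rw [Complex.norm_real, uniformDensity, norm_indicator_eq_indicator_norm]
  rw [integral_indicator_const _ measurableSet_Icc, Real.volume_real_Icc_of_le (by linarith)]
  simp only [Real.norm_eq_abs, abs_of_pos (by positivity : 0 < 1 / (2 * a)), smul_eq_mul]
  field_simp
  ring

lemma norm_fourierStar_uniformDensity_le_inv {a : ℝ} (ha : 0 < a) {ξ : ℝ} (hξ : ξ ≠ 0) :
    ‖fourierStar (fun x => (uniformDensity a x : ℂ)) ξ‖ ≤ (a * |ξ|)⁻¹ := by
  have hc : Complex.I * ξ ≠ 0 := by simp [Complex.I_ne_zero, hξ]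
  have hind : ∀ x : ℝ, Complex.exp (Complex.I * x * ξ) * (uniformDensity a x : ℂ)
      = (Icc (-a) a).indicator (fun x : ℝ => Complex.exp (Complex.I * ξ * x) * (1 / (2 * a) : ℝ))
        x := by
    intro x
    by_cases hx : x ∈ Icc (-a) a <;> simp [uniformDensity, hx, mul_right_comm]
  rw [fourierStar, integral_congr_ae (Filter.Eventually.of_forall hind),
    integral_indicator measurableSet_Icc, integral_Icc_eq_integral_Ioc,
    ← intervalIntegral.integral_of_le (by linarith), intervalIntegral.integral_mul_const,
    integral_exp_mul_complex hc, norm_mul, norm_div, Complex.norm_real, norm_mul, Complex.norm_I,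
    Complex.norm_real]
  have hdiff : ‖Complex.exp (Complex.I * ξ * a) - Complex.exp (Complex.I * ξ * (-a : ℝ))‖ ≤ 2 :=
    (norm_sub_le _ _).trans (by
      rw [mul_assoc, mul_assoc, ← Complex.ofReal_mul, ← Complex.ofReal_mul,
        Complex.norm_exp_I_mul_ofReal, Complex.norm_exp_I_mul_ofReal]
      norm_num)
  push_cast at hdiff ⊢
  rw [Real.norm_eq_abs, Real.norm_eq_abs, abs_of_pos (by positivity : 0 < 1 / (2 * a))]
  have : 0 < |ξ| := abs_pos.2 hξ
  calc _ ≤ 2 / (1 * |ξ|) * (1 / (2 * a)) := by gcongr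
    _ = (a * |ξ|)⁻¹ := by field_simp

lemma norm_sq_fourierStar_uniformDensity_le {a n : ℝ} (ha : 0 < a) (hn : 0 < n) {ξ : ℝ}
    (hξ : n ≤ |ξ|) :
    ‖fourierStar (fun x => (uniformDensity a x : ℂ)) ξ‖ ^ 2 ≤ min 1 ((a * n) ^ 2)⁻¹ := by
  have hξ0 : ξ ≠ 0 := abs_pos.1 (hn.trans_le hξ)
  refine le_min (pow_le_one₀ (norm_nonneg _) (norm_fourierStar_uniformDensity_le_one ha ξ)) ?_
  rw [← inv_pow]
  gcongr
  exact (norm_fourierStar_uniformDensity_le_inv ha hξ0).trans (by gcongr)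

def waveletBand : Set ℝ := Icc (-(8 * π / 3)) (-(2 * π / 3)) ∪ Icc (2 * π / 3) (8 * π / 3)

lemma one_le_abs_of_mem_waveletBand {t : ℝ} (ht : t ∈ waveletBand) : 1 ≤ |t| := by
  have := Real.pi_gt_three
  rcases ht with ⟨-, ht⟩ | ⟨ht, -⟩
  · rw [abs_of_neg (by linarith)]; linarith
  · rw [abs_of_pos (by linarith)]; linarith

lemma measurableSet_waveletBand : MeasurableSet waveletBand :=
  measurableSet_Icc.union measurableSet_Icc

lemma integral_waveletBand_norm_sq_trigPoly (S : Finset ℤ) (c : ℤ → ℂ) :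
    ∫ t in waveletBand, ‖trigPoly S c t‖ ^ 2 = 4 * π * ∑ k ∈ S, ‖c k‖ ^ 2 := by
  have hpi := Real.pi_pos
  have hdisj : Disjoint (Icc (-(8 * π / 3)) (-(2 * π / 3))) (Icc (2 * π / 3) (8 * π / 3)) :=
    Set.disjoint_left.2 fun x hx1 hx2 => by linarith [hx1.2, hx2.1]
  have hcont : Continuous fun t => ‖trigPoly S c t‖ ^ 2 := (continuous_trigPoly S c).norm.pow 2
  have hperiod : ∀ t₀ : ℝ, ∫ t in Icc t₀ (t₀ + 2 * π), ‖trigPoly S c t‖ ^ 2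
      = 2 * π * ∑ k ∈ S, ‖c k‖ ^ 2 := fun t₀ => by
    rw [integral_Icc_eq_integral_Ioc, ← intervalIntegral.integral_of_le (by linarith),
      integral_norm_sq_trigPoly]
  rw [waveletBand, setIntegral_union hdisj measurableSet_Icc
    hcont.integrableOn_Icc hcont.integrableOn_Icc]
  have h₁ := hperiod (-(8 * π / 3))
  have h₂ := hperiod (2 * π / 3)
  rw [show -(8 * π / 3) + 2 * π = -(2 * π / 3) by ring] at h₁
  rw [show 2 * π / 3 + 2 * π = 8 * π / 3 by ring] at h₂
  rw [h₁, h₂]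
  ring

lemma integral_norm_sq_le_of_comp_mul_left {F : ℝ → ℂ} {G : ℝ → ℝ} {B : Set ℝ}
    (hB : MeasurableSet B) (hG : IntegrableOn G B) {n : ℝ} (hn : 0 < n)
    (hin : ∀ t ∈ B, ‖F (n * t)‖ ^ 2 ≤ G t) (hout : ∀ t ∉ B, F (n * t) = 0) :
    ∫ ξ, ‖F ξ‖ ^ 2 ≤ n * ∫ t in B, G t := by
  have hdilate : ∫ ξ, ‖F ξ‖ ^ 2 = n * ∫ t, ‖F (n * t)‖ ^ 2 := by
    rw [Measure.integral_comp_mul_left (fun ξ => ‖F ξ‖ ^ 2) n, smul_eq_mul,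
      abs_of_pos (inv_pos.2 hn), mul_inv_cancel_left₀ hn.ne']
  have hpt : ∀ t, ‖F (n * t)‖ ^ 2 ≤ B.indicator G t := fun t => by
    by_cases ht : t ∈ B
    · simpa [ht] using hin t ht
    · simp [ht, hout t ht]
  rw [hdilate, ← integral_indicator hB]
  refine mul_le_mul_of_nonneg_left ?_ hn.le
  exact integral_mono_of_nonneg (Filter.Eventually.of_forall fun t => by positivity)
    ((integrable_indicator_iff hB).2 hG) (Filter.Eventually.of_forall hpt)

lemma integral_norm_sq_le_of_eq_mul_trigPoly {F U V : ℝ → ℂ} {n m C : ℝ} (r : ℂ) (hn : 0 < n)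
    (S : Finset ℤ) (β : ℤ → ℂ) (hF : ∀ t, F (n * t) = U (n * t) * r * V t * trigPoly S β t)
    (hU : ∀ ξ, n ≤ |ξ| → ‖U ξ‖ ^ 2 ≤ m) (hV : ∀ t, ‖V t‖ ≤ C)
    (hV0 : ∀ t ∉ waveletBand, V t = 0) :
    ∫ ξ, ‖F ξ‖ ^ 2 ≤ n * (m * ‖r‖ ^ 2 * C ^ 2 * (4 * π * ∑ k ∈ S, ‖β k‖ ^ 2)) := by
  have hG : Continuous fun t => m * ‖r‖ ^ 2 * C ^ 2 * ‖trigPoly S β t‖ ^ 2 :=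
    continuous_const.mul ((continuous_trigPoly S β).norm.pow 2)
  have hin : ∀ t ∈ waveletBand,
      ‖F (n * t)‖ ^ 2 ≤ m * ‖r‖ ^ 2 * C ^ 2 * ‖trigPoly S β t‖ ^ 2 := fun t ht => by
    have hUt := hU (n * t) (by
      rw [abs_mul, abs_of_pos hn]
      exact le_mul_of_one_le_right hn.le (one_le_abs_of_mem_waveletBand ht))
    have hm : 0 ≤ m := (sq_nonneg _).trans hUt
    rw [hF, norm_mul, norm_mul, norm_mul, mul_pow, mul_pow, mul_pow]
    gcongr
    exact hV t
  have hout : ∀ t ∉ waveletBand, F (n * t) = 0 := fun t ht => by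
    rw [hF, hV0 t ht, mul_zero, zero_mul]
  calc _ ≤ n * ∫ t in waveletBand, m * ‖r‖ ^ 2 * C ^ 2 * ‖trigPoly S β t‖ ^ 2 :=
        integral_norm_sq_le_of_comp_mul_left measurableSet_waveletBand
          (hG.integrableOn_Icc.union hG.integrableOn_Icc) hn hin hout
    _ = _ := by rw [integral_const_mul, integral_waveletBand_norm_sq_trigPoly]

theorem stmt_18_general (a cψ : ℝ) (ha : 0 < a)
    (ψ : ℝ → ℝ) (hψ1 : Integrable ψ)
    (hb1 : ∀ ξ : ℝ, ‖∫ x : ℝ, Complex.exp (Complex.I * x * ξ) * (ψ x : ℂ)‖ ≤ cψ)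
    (hb2 : ∀ ξ : ℝ,
      ξ ∉ Set.Icc (-(8 * π / 3)) (-(2 * π / 3)) ∪ Set.Icc (2 * π / 3) (8 * π / 3) →
        (∫ x : ℝ, Complex.exp (Complex.I * x * ξ) * (ψ x : ℂ)) = 0)
    (j : ℕ) (S : Finset ℤ) (b : ℤ → ℝ) (hb : ∀ k, |b k| ≤ 1)
    (fε : ℝ → ℝ) (hfε : fε = Set.indicator (Set.Icc (-a) a) fun _ => 1 / (2 * a))
    (θ : ℝ → ℝ)
    (hθ : ∀ x : ℝ, θ x =
      ∑ k ∈ S, b k * ∫ u, fε u * ((2 : ℝ) ^ ((j : ℝ) / 2) * ψ (2 ^ j * (x - u) - (k : ℝ)))) :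
    (∫ ξ : ℝ, ‖∫ x : ℝ, Complex.exp (Complex.I * x * ξ) * (θ x : ℂ)‖ ^ 2)
      ≤ 6 * π * cψ ^ 2 * S.card * min 1 (((a * 2 ^ j) ^ 2)⁻¹) := by
  replace hfε : fε = uniformDensity a := hfε
  subst hfε
  set n : ℝ := 2 ^ j
  set c : ℝ := 2 ^ ((j : ℝ) / 2)
  set m := min 1 ((a * n) ^ 2)⁻¹
  have hn : 0 < n := by positivity
  have hc : c ^ 2 = n := by
    rw [← Real.rpow_natCast, ← Real.rpow_mul zero_le_two]
    norm_num [n]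
  have hF : ∀ t, fourierStar (fun x => (θ x : ℂ)) (n * t)
      = fourierStar (fun x => (uniformDensity a x : ℂ)) (n * t) * (c / n)
        * fourierStar (fun x => (ψ x : ℂ)) t * trigPoly S (fun k => b k) t := fun t => by
    simp_rw [hθ]
    rw [fourierStar_sum_convolution_comp_mul_sub (integrable_uniformDensity a) hψ1 hn,
      mul_div_cancel_left₀ t hn.ne']
  have hbsq : ∑ k ∈ S, b k ^ 2 ≤ S.card := by
    simpa using Finset.sum_le_card_nsmul S (fun k => b k ^ 2) 1 fun k _ =>
      (sq_le_one_iff_abs_le_one _).2 (hb k)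
  calc _ ≤ n * (m * ‖(c : ℂ) / n‖ ^ 2 * cψ ^ 2 * (4 * π * ∑ k ∈ S, ‖(b k : ℂ)‖ ^ 2)) :=
        integral_norm_sq_le_of_eq_mul_trigPoly _ hn S _ hF
          (fun ξ hξ => norm_sq_fourierStar_uniformDensity_le ha hn hξ) hb1 hb2
    _ = m * cψ ^ 2 * (4 * π * ∑ k ∈ S, b k ^ 2) := by
        simp only [norm_div, Complex.norm_real, Real.norm_eq_abs, div_pow, sq_abs, hc]
        field_simp
    _ ≤ m * cψ ^ 2 * (4 * π * S.card) := by
        have : 0 ≤ m := le_min zero_le_one (by positivity)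
        gcongr
    _ ≤ 6 * π * cψ ^ 2 * S.card * m := by
        have : 0 ≤ π * cψ ^ 2 * S.card * m := by positivity
        linarith

/-- For `a > 0`, `j ∈ ℕ`, a finite `S ⊆ ℤ` and coefficients `|b_k| ≤ 1`, the function
`θ = Σ_{k∈S} b_k (f_ε ⋆ ψ_{jk})` (with `f_ε` the uniform density on `[−a,a]` and `ψ` a
Meyer-type wavelet) satisfies `∫ |θ^*(ξ)|² dξ ≤ 6π c_ψ² |S| min(1, (a2^j)⁻²)`. -/
theorem stmt_18 (a cψ : ℝ) (ha : 0 < a) (hcψ : 0 < cψ)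
    (ψ : ℝ → ℝ) (hψ1 : Integrable ψ) (hψ2 : MemLp ψ 2)
    (hb1 : ∀ ξ : ℝ, ‖∫ x : ℝ, Complex.exp (Complex.I * x * ξ) * (ψ x : ℂ)‖ ≤ cψ)
    (hb2 : ∀ ξ : ℝ,
      ξ ∉ Set.Icc (-(8 * π / 3)) (-(2 * π / 3)) ∪ Set.Icc (2 * π / 3) (8 * π / 3) →
        (∫ x : ℝ, Complex.exp (Complex.I * x * ξ) * (ψ x : ℂ)) = 0)
    (j : ℕ) (S : Finset ℤ) (b : ℤ → ℝ) (hb : ∀ k, |b k| ≤ 1)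
    (fε : ℝ → ℝ) (hfε : fε = Set.indicator (Set.Icc (-a) a) fun _ => 1 / (2 * a))
    (θ : ℝ → ℝ)
    (hθ : ∀ x : ℝ, θ x =
      ∑ k ∈ S, b k * ∫ u, fε u * ((2 : ℝ) ^ ((j : ℝ) / 2) * ψ (2 ^ j * (x - u) - (k : ℝ)))) :
    (∫ ξ : ℝ, ‖∫ x : ℝ, Complex.exp (Complex.I * x * ξ) * (θ x : ℂ)‖ ^ 2)
      ≤ 6 * π * cψ ^ 2 * S.card * min 1 (((a * 2 ^ j) ^ 2)⁻¹) :=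
  stmt_18_general a cψ ha ψ hψ1 hb1 hb2 j S b hb fε hfε θ hθ
end

section
/- Fix a > 0 and an integer j ≥ 0. Let S ⊆ ℤ be a finite set and let b : ℤ → ℝ satisfy |b_k| ≤ 1 for all k. Define α_1(ξ) = 2^{−j/2} (f_ε^*)'(ξ) ψ^*(ξ 2^{−j}) Σ_{k∈S} b_k e^{iξ k 2^{−j}}, where (f_ε^*)'(ξ) = cos(aξ)/ξ − sin(aξ)/(aξ²) is the derivative of the Fourier transform of the uniform density on [−a,a]. Then ∫_ℝ |α_1(ξ)|² dξ ≤ 24π c_ψ² 2^{−2j} |S|. -/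
/-!
On the support of `ψ^*(ξ 2^{-j})` we have `|ξ| ≥ 2^j · 2π/3`, so the elementary bound
`|(f_ε^*)'(ξ)| ≤ 2/|ξ|` gives `|(f_ε^*)'(ξ)| ≤ 3 · 2^{-j}/π` there. After the substitution
`t = 2^{-j} ξ` the two halves of the support, `[2π/3, 8π/3]` and its mirror image, are each one
full period of `t ↦ Σ b_k e^{ikt}`, on which Parseval's identity gives `2π Σ b_k²`. Altogether
`∫ |α₁|² ≤ (36/π) c_ψ² 2^{-2j} Σ b_k² ≤ 24π c_ψ² 2^{-2j} |S|`.
-/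

open MeasureTheory Real ComplexConjugate

noncomputable def trigSum (S : Finset ℤ) (b : ℤ → ℝ) (t : ℝ) : ℂ :=
  ∑ k ∈ S, (b k : ℂ) * Complex.exp ((k * t : ℝ) * Complex.I)

theorem continuous_trigSum (S : Finset ℤ) (b : ℤ → ℝ) : Continuous (trigSum S b) := by
  unfold trigSum; fun_prop

def psiBand : Set ℝ :=
  Set.Icc (-(8 * π / 3)) (-(2 * π / 3)) ∪ Set.Icc (2 * π / 3) (8 * π / 3)

theorem integral_cos_int_mul_period (m : ℤ) (c : ℝ) :
    ∫ t in c..c + 2 * π, cos (m * t) = if m = 0 then 2 * π else 0 := by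
  split_ifs with hm
  · simp [hm]
  · have hm' : (m : ℝ) ≠ 0 := Int.cast_ne_zero.mpr hm
    rw [intervalIntegral.integral_comp_mul_left (fun x => cos x) hm', integral_cos, mul_add,
      sin_add_int_mul_two_pi, sub_self, smul_zero]

theorem norm_trigSum_sq (S : Finset ℤ) (b : ℤ → ℝ) (t : ℝ) :
    ‖trigSum S b t‖ ^ 2 = ∑ k ∈ S, ∑ l ∈ S, b k * b l * cos ((k - l : ℤ) * t) := by
  have hterm : ∀ k l : ℤ,
      (b k : ℂ) * Complex.exp ((k * t : ℝ) * Complex.I) *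
        conj ((b l : ℂ) * Complex.exp ((l * t : ℝ) * Complex.I)) =
      (b k * b l : ℝ) * Complex.exp (((k - l : ℤ) * t : ℝ) * Complex.I) := by
    intro k l
    rw [map_mul, Complex.conj_ofReal, ← Complex.exp_conj, map_mul, Complex.conj_ofReal,
      Complex.conj_I, mul_mul_mul_comm, ← Complex.exp_add]
    push_cast
    ring_nf
  have hre := congrArg Complex.re (Complex.mul_conj' (trigSum S b t))
  rw [← Complex.ofReal_pow, Complex.ofReal_re] at hre
  rw [← hre, trigSum, map_sum, Finset.sum_mul_sum, Complex.re_sum]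
  simp only [hterm, Complex.re_sum, Complex.re_ofReal_mul, Complex.exp_ofReal_mul_I_re]

theorem integral_norm_trigSum_sq (S : Finset ℤ) (b : ℤ → ℝ) (c : ℝ) :
    ∫ t in c..c + 2 * π, ‖trigSum S b t‖ ^ 2 = 2 * π * ∑ k ∈ S, b k ^ 2 := by
  simp_rw [norm_trigSum_sq]
  rw [intervalIntegral.integral_finsetSum fun _ _ =>
    Continuous.intervalIntegrable (by fun_prop) _ _, Finset.mul_sum]
  refine Finset.sum_congr rfl fun k hk => ?_
  rw [intervalIntegral.integral_finsetSum fun _ _ =>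
    Continuous.intervalIntegrable (by fun_prop) _ _]
  simp_rw [intervalIntegral.integral_const_mul, integral_cos_int_mul_period, sub_eq_zero,
    mul_ite, mul_zero, eq_comm (a := k), Finset.sum_ite_eq', if_pos hk]
  ring

theorem measurableSet_psiBand : MeasurableSet psiBand :=
  measurableSet_Icc.union measurableSet_Icc

theorem setIntegral_psiBand_norm_trigSum_sq (S : Finset ℤ) (b : ℤ → ℝ) :
    ∫ t in psiBand, ‖trigSum S b t‖ ^ 2 = 4 * π * ∑ k ∈ S, b k ^ 2 := by
  have hcont : Continuous fun t => ‖trigSum S b t‖ ^ 2 := (continuous_trigSum S b).norm.pow 2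
  have hdisj : Disjoint (Set.Icc (-(8 * π / 3)) (-(2 * π / 3))) (Set.Icc (2 * π / 3) (8 * π / 3)) :=
    Set.disjoint_left.mpr fun t h₁ h₂ => by linarith [h₁.2, h₂.1, pi_pos]
  have hperiod : ∀ c : ℝ, ∫ t in Set.Icc c (c + 2 * π), ‖trigSum S b t‖ ^ 2 =
      2 * π * ∑ k ∈ S, b k ^ 2 := fun c => by
    rw [integral_Icc_eq_integral_Ioc, ← intervalIntegral.integral_of_le (by linarith [pi_pos]),
      integral_norm_trigSum_sq]
  rw [psiBand, setIntegral_union hdisj measurableSet_Icc hcont.integrableOn_Icc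
    hcont.integrableOn_Icc, show -(2 * π / 3) = -(8 * π / 3) + 2 * π by ring,
    show 8 * π / 3 = 2 * π / 3 + 2 * π by ring, hperiod, hperiod]
  ring

theorem two_pi_div_three_le_abs_of_mem_psiBand {t : ℝ} (ht : t ∈ psiBand) : 2 * π / 3 ≤ |t| := by
  rcases ht with ⟨-, ht⟩ | ⟨ht, -⟩
  · exact (le_neg.mpr ht).trans (neg_le_abs t)
  · exact ht.trans (le_abs_self t)

theorem abs_cos_div_sub_sin_div_le (a ξ : ℝ) :
    |cos (a * ξ) / ξ - sin (a * ξ) / (a * ξ ^ 2)| ≤ 2 / |ξ| := by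
  have hsinc : |sin (a * ξ) / (a * ξ)| ≤ 1 := by
    rw [abs_div]; exact div_le_one_of_le₀ abs_sin_le_abs (abs_nonneg _)
  rw [show a * ξ ^ 2 = a * ξ * ξ by ring, ← div_div]
  calc |cos (a * ξ) / ξ - sin (a * ξ) / (a * ξ) / ξ|
      ≤ |cos (a * ξ)| / |ξ| + |sin (a * ξ) / (a * ξ)| / |ξ| := by
        rw [← abs_div, ← abs_div]; exact abs_sub _ _
    _ ≤ 1 / |ξ| + 1 / |ξ| := by gcongr; exact abs_cos_le_one _
    _ = 2 / |ξ| := by ring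

theorem norm_sq_le_indicator_psiBand {cψ r : ℝ} (hr : 0 < r) {ψs : ℝ → ℂ}
    (hψs_le : ∀ ξ, ‖ψs ξ‖ ≤ cψ) (hψs_supp : ∀ ξ, ξ ∉ psiBand → ψs ξ = 0)
    (a s ξ : ℝ) (G : ℝ → ℂ) :
    ‖(s : ℂ) * ((cos (a * ξ) / ξ - sin (a * ξ) / (a * ξ ^ 2) : ℝ) : ℂ) * ψs (ξ * r) *
        G (ξ * r)‖ ^ 2 ≤
      s ^ 2 * (3 * r / π) ^ 2 * cψ ^ 2 * psiBand.indicator (fun t => ‖G t‖ ^ 2) (ξ * r) := by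
  by_cases hξ : ξ * r ∈ psiBand
  · have hband := two_pi_div_three_le_abs_of_mem_psiBand hξ
    rw [abs_mul, abs_of_pos hr] at hband
    have hd : |cos (a * ξ) / ξ - sin (a * ξ) / (a * ξ ^ 2)| ≤ 3 * r / π :=
      calc _ ≤ 2 / |ξ| := abs_cos_div_sub_sin_div_le a ξ
        _ = 2 * r / (|ξ| * r) := (mul_div_mul_right _ _ hr.ne').symm
        _ ≤ 2 * r / (2 * π / 3) := by gcongr
        _ = 3 * r / π := by field_simp
    rw [Set.indicator_of_mem hξ, norm_mul, norm_mul, norm_mul, Complex.norm_real,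
      Complex.norm_real, Real.norm_eq_abs, Real.norm_eq_abs, mul_pow, mul_pow, mul_pow, sq_abs]
    gcongr
    exact hψs_le _
  · rw [Set.indicator_of_notMem hξ, hψs_supp _ hξ]
    simp

theorem integral_norm_sq_le_of_psiBand {cψ r s : ℝ} (hr : 0 < r) (hs : s ^ 2 = r)
    {ψs : ℝ → ℂ} (hψs_le : ∀ ξ, ‖ψs ξ‖ ≤ cψ) (hψs_supp : ∀ ξ, ξ ∉ psiBand → ψs ξ = 0)
    (a : ℝ) (S : Finset ℤ) (b : ℤ → ℝ) :
    ∫ ξ, ‖(s : ℂ) * ((cos (a * ξ) / ξ - sin (a * ξ) / (a * ξ ^ 2) : ℝ) : ℂ) * ψs (ξ * r) *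
        trigSum S b (ξ * r)‖ ^ 2 ≤ 36 / π * cψ ^ 2 * r ^ 2 * ∑ k ∈ S, b k ^ 2 := by
  set F : ℝ → ℝ := fun t => r * (3 * r / π) ^ 2 * cψ ^ 2 *
    psiBand.indicator (fun t => ‖trigSum S b t‖ ^ 2) t
  have hF : Integrable F := by
    have hcont : Continuous fun t => ‖trigSum S b t‖ ^ 2 := (continuous_trigSum S b).norm.pow 2
    exact ((hcont.integrableOn_Icc.union hcont.integrableOn_Icc).integrable_indicator
      measurableSet_psiBand).const_mul _
  have hle : ∀ ξ, ‖(s : ℂ) * ((cos (a * ξ) / ξ - sin (a * ξ) / (a * ξ ^ 2) : ℝ) : ℂ) *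
      ψs (ξ * r) * trigSum S b (ξ * r)‖ ^ 2 ≤ F (ξ * r) := fun ξ => by
    simpa only [hs] using norm_sq_le_indicator_psiBand hr hψs_le hψs_supp a s ξ (trigSum S b)
  calc _ ≤ ∫ ξ, F (ξ * r) :=
        integral_mono_of_nonneg (ae_of_all _ fun _ => sq_nonneg _) (hF.comp_mul_right' hr.ne')
          (ae_of_all _ hle)
    _ = 36 / π * cψ ^ 2 * r ^ 2 * ∑ k ∈ S, b k ^ 2 := by
      rw [Measure.integral_comp_mul_right, integral_const_mul,
        integral_indicator measurableSet_psiBand, setIntegral_psiBand_norm_trigSum_sq, abs_inv,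
        abs_of_pos hr, smul_eq_mul]
      field_simp
      ring

theorem stmt_19_general (a cψ : ℝ)
    (ψs : ℝ → ℂ)
    (hb1 : ∀ ξ : ℝ, ‖ψs ξ‖ ≤ cψ)
    (hb2 : ∀ ξ : ℝ,
      ξ ∉ Set.Icc (-(8 * π / 3)) (-(2 * π / 3)) ∪ Set.Icc (2 * π / 3) (8 * π / 3) →
        ψs ξ = 0)
    (j : ℕ) (S : Finset ℤ) (b : ℤ → ℝ) (hb : ∀ k, |b k| ≤ 1)
    (α₁ : ℝ → ℂ)
    (hα₁ : ∀ ξ : ℝ, α₁ ξ =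
      (((2 : ℝ) ^ (-(j : ℝ) / 2) : ℝ) : ℂ) *
        ((Real.cos (a * ξ) / ξ - Real.sin (a * ξ) / (a * ξ ^ 2) : ℝ) : ℂ) *
        ψs (ξ * (2 : ℝ) ^ (-(j : ℝ))) *
        ∑ k ∈ S, ((b k : ℝ) : ℂ) *
          Complex.exp (Complex.I * ξ * (k : ℝ) * ((2 : ℝ) ^ (-(j : ℝ)) : ℝ))) :
    (∫ ξ : ℝ, ‖α₁ ξ‖ ^ 2) ≤ 24 * π * cψ ^ 2 * (2 : ℝ) ^ (-(2 * (j : ℝ))) * S.card := by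
  have hs : ((2 : ℝ) ^ (-(j : ℝ) / 2)) ^ 2 = (2 : ℝ) ^ (-(j : ℝ)) := by
    rw [← rpow_natCast, ← rpow_mul zero_le_two]
    ring_nf
  have hr2 : (2 : ℝ) ^ (-(2 * (j : ℝ))) = ((2 : ℝ) ^ (-(j : ℝ))) ^ 2 := by
    rw [← rpow_natCast, ← rpow_mul zero_le_two]
    ring_nf
  have hα₁_trigSum : ∀ ξ, α₁ ξ = (((2 : ℝ) ^ (-(j : ℝ) / 2) : ℝ) : ℂ) *
      ((cos (a * ξ) / ξ - sin (a * ξ) / (a * ξ ^ 2) : ℝ) : ℂ) *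
      ψs (ξ * (2 : ℝ) ^ (-(j : ℝ))) * trigSum S b (ξ * (2 : ℝ) ^ (-(j : ℝ))) := fun ξ => by
    rw [hα₁, trigSum]
    congr 1
    refine Finset.sum_congr rfl fun k _ => ?_
    push_cast
    ring_nf
  have hsum_sq : ∑ k ∈ S, b k ^ 2 ≤ S.card := by
    simpa using Finset.sum_le_card_nsmul S (fun k => b k ^ 2) 1 fun k _ =>
      (sq_le_one_iff_abs_le_one _).mpr (hb k)
  have hπ : 36 / π ≤ 24 * π := by
    rw [div_le_iff₀ pi_pos]
    nlinarith [pi_gt_three]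
  simp_rw [hα₁_trigSum, hr2]
  calc _ ≤ 36 / π * cψ ^ 2 * ((2 : ℝ) ^ (-(j : ℝ))) ^ 2 * ∑ k ∈ S, b k ^ 2 :=
        integral_norm_sq_le_of_psiBand (by positivity) hs hb1 hb2 a S b
    _ ≤ 24 * π * cψ ^ 2 * ((2 : ℝ) ^ (-(j : ℝ))) ^ 2 * S.card := by gcongr

/-- For `a > 0`, `j ∈ ℕ`, a finite `S ⊆ ℤ` and coefficients `|b_k| ≤ 1`, the function
`α₁(ξ) = 2^{−j/2} (f_ε^*)'(ξ) ψ^*(ξ 2^{−j}) Σ_{k∈S} b_k e^{iξk2^{−j}}`, where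
`(f_ε^*)'(ξ) = cos(aξ)/ξ − sin(aξ)/(aξ²)`, satisfies
`∫ |α₁(ξ)|² dξ ≤ 24π c_ψ² 2^{−2j} |S|`. -/
theorem stmt_19 (a cψ : ℝ) (ha : 0 < a) (hcψ : 0 < cψ)
    (ψ : ℝ → ℝ) (hψ1 : Integrable ψ) (hψ2 : MemLp ψ 2)
    (ψs : ℝ → ℂ)
    (hψs : ∀ ξ : ℝ, ψs ξ = ∫ x : ℝ, Complex.exp (Complex.I * x * ξ) * (ψ x : ℂ))
    (hb1 : ∀ ξ : ℝ, ‖ψs ξ‖ ≤ cψ)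
    (hb2 : ∀ ξ : ℝ,
      ξ ∉ Set.Icc (-(8 * π / 3)) (-(2 * π / 3)) ∪ Set.Icc (2 * π / 3) (8 * π / 3) →
        ψs ξ = 0)
    (j : ℕ) (S : Finset ℤ) (b : ℤ → ℝ) (hb : ∀ k, |b k| ≤ 1)
    (α₁ : ℝ → ℂ)
    (hα₁ : ∀ ξ : ℝ, α₁ ξ =
      (((2 : ℝ) ^ (-(j : ℝ) / 2) : ℝ) : ℂ) *
        ((Real.cos (a * ξ) / ξ - Real.sin (a * ξ) / (a * ξ ^ 2) : ℝ) : ℂ) *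
        ψs (ξ * (2 : ℝ) ^ (-(j : ℝ))) *
        ∑ k ∈ S, ((b k : ℝ) : ℂ) *
          Complex.exp (Complex.I * ξ * (k : ℝ) * ((2 : ℝ) ^ (-(j : ℝ)) : ℝ))) :
    (∫ ξ : ℝ, ‖α₁ ξ‖ ^ 2) ≤ 24 * π * cψ ^ 2 * (2 : ℝ) ^ (-(2 * (j : ℝ))) * S.card :=
  stmt_19_general a cψ ψs hb1 hb2 j S b hb α₁ hα₁
end
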